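/- arXiv:1802.04447 — 3 statements merged into one kernel-verified Lean document; each statement's English description precedes it below -/
import Mathlib

section
/- Let W ∈ ℝ^{N×N} be a symmetric matrix with nonnegative entries and positive degrees, let W_c be its coarse graph with respect to a partition into n nonempty parts with normalized Laplacian L_c, let C ∈ ℝ^{n×N} be the normalized coarsening matrix, and let L_l be the normalized Laplacian of the lifted graph W_l. If u_c ∈ ℝⁿ satisfies L_c u_c = λ u_c, then the lifted vector Cᵀ u_c satisfies L_l (Cᵀ u_c) = λ (Cᵀ u_c); that is, eigenvectors of the coarse normalized Laplacian lift to eigenvectors of the lifted normalized Laplacian with the same eigenvalue. -/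
open Matrix BigOperators

noncomputable section

/-- Degree of node `i`: the `i`-th row sum of the weight matrix. -/
def deg {N : ℕ} (W : Matrix (Fin N) (Fin N) ℝ) (i : Fin N) : ℝ := ∑ j, W i j

/-- `D^{-1/2}`: the diagonal matrix of inverse square roots of degrees. -/
def invSqrtDeg {N : ℕ} (W : Matrix (Fin N) (Fin N) ℝ) : Matrix (Fin N) (Fin N) ℝ :=
  Matrix.diagonal fun i => (Real.sqrt (deg W i))⁻¹

/-- Normalized Laplacian `L = I - D^{-1/2} W D^{-1/2}`. -/
def normLap {N : ℕ} (W : Matrix (Fin N) (Fin N) ℝ) : Matrix (Fin N) (Fin N) ℝ :=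
  1 - invSqrtDeg W * W * invSqrtDeg W

/-- Random-walk transition matrix `D^{-1} W`. -/
def rwMat {N : ℕ} (W : Matrix (Fin N) (Fin N) ℝ) : Matrix (Fin N) (Fin N) ℝ :=
  Matrix.diagonal (fun i => (deg W i)⁻¹) * W

/-- The 0/1 partition matrix `P` of the partition encoded by `f` (node `i` lies in part `f i`). -/
def partMat {N n : ℕ} (f : Fin N → Fin n) : Matrix (Fin n) (Fin N) ℝ :=
  fun p i => if f i = p then 1 else 0

/-- Size `|S_p|` of the part `p`. -/
def partSize {N n : ℕ} (f : Fin N → Fin n) (p : Fin n) : ℕ :=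
  (Finset.univ.filter fun i => f i = p).card

/-- Coarse adjacency matrix `W_c = P W Pᵀ`. -/
def coarse {N n : ℕ} (f : Fin N → Fin n) (W : Matrix (Fin N) (Fin N) ℝ) :
    Matrix (Fin n) (Fin n) ℝ :=
  partMat f * W * (partMat f)ᵀ

/-- Lifted adjacency matrix `W_l(i,j) = W_c(f i, f j) / (|S_{f i}|·|S_{f j}|)`. -/
def liftG {N n : ℕ} (f : Fin N → Fin n) (W : Matrix (Fin N) (Fin N) ℝ) :
    Matrix (Fin N) (Fin N) ℝ :=
  fun i j => coarse f W (f i) (f j) / ((partSize f (f i) : ℝ) * (partSize f (f j) : ℝ))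

/-- Normalized coarsening matrix `C` with `C(p,i) = 1/√|S_p|` iff `i ∈ S_p`. -/
def coarsenMat {N n : ℕ} (f : Fin N → Fin n) : Matrix (Fin n) (Fin N) ℝ :=
  fun p i => if f i = p then (Real.sqrt (partSize f p : ℝ))⁻¹ else 0

/-- Pseudo-inverse `P⁺` of the partition matrix, `P⁺(i,p) = 1/|S_p|` iff `i ∈ S_p`. -/
def pinvMat {N n : ℕ} (f : Fin N → Fin n) : Matrix (Fin N) (Fin n) ℝ :=
  fun i p => if f i = p then ((partSize f p : ℝ))⁻¹ else 0

/-- `μ` lists the eigenvalues of `A` in nondecreasing order (with multiplicity):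
`μ` is monotone and the characteristic polynomial of `A` splits as `∏ (X - μ i)`. -/
def sortedEigs {m : ℕ} (A : Matrix (Fin m) (Fin m) ℝ) (μ : Fin m → ℝ) : Prop :=
  Monotone μ ∧ A.charpoly = ∏ i, (Polynomial.X - Polynomial.C (μ i))

/-- Squared Frobenius norm of a matrix. -/
def frobSq {a b : ℕ} (M : Matrix (Fin a) (Fin b) ℝ) : ℝ := ∑ i, ∑ j, (M i j) ^ 2

/-- Partial spectral distance between sorted spectra `μ` (original, size `N`) and
`μc` (coarse, size `n`): `∑_{i=1}^k |μ(i) - μc(i)| + ∑_{i=k+1}^n |μc(i) - μ(i+N-n)|`,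
where `k` is the largest index with `μc k < 1` (for monotone `μc`). -/
def SDpart {N n : ℕ} (h : n ≤ N) (μ : Fin N → ℝ) (μc : Fin n → ℝ) : ℝ :=
  ∑ i : Fin n,
    if μc i < 1 then |μ (Fin.castLE h i) - μc i|
    else |μc i - μ ⟨i.1 + N - n, by have := i.2; omega⟩|

/-! The lifted graph is the conjugate `W_l = P⁺ W_c P⁺ᵀ` of the coarse graph by the
pseudo-inverse of the partition matrix, so its degrees are `d_l(i) = d_c(p) / |S_p|` for
`i ∈ S_p`. Hence `D_l^{-1/2} P⁺ = Cᵀ D_c^{-1/2}`, and together with `C Cᵀ = I` this makes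
the lifted normalized Laplacian intertwine with the coarse one: `L_l Cᵀ = Cᵀ L_c`. -/

section Lift

variable {N n : ℕ} {f : Fin N → Fin n}

lemma partSize_pos (hf : Function.Surjective f) (p : Fin n) : 0 < partSize f p := by
  obtain ⟨i, rfl⟩ := hf p
  exact Finset.card_pos.2 ⟨i, Finset.mem_filter.2 ⟨Finset.mem_univ i, rfl⟩⟩

lemma deg_eq_mulVec_one {m : ℕ} (A : Matrix (Fin m) (Fin m) ℝ) : deg A = A *ᵥ 1 := by
  ext i
  simp [deg, mulVec, dotProduct]

lemma pinvMat_mulVec (v : Fin n → ℝ) (i : Fin N) :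
    (pinvMat f *ᵥ v) i = v (f i) / partSize f (f i) := by
  simp [pinvMat, mulVec, dotProduct, div_eq_inv_mul]

lemma pinvMat_transpose_mulVec_one (hf : Function.Surjective f) :
    (pinvMat f)ᵀ *ᵥ 1 = 1 := by
  ext p
  have hp : (partSize f p : ℝ) ≠ 0 := by exact_mod_cast (partSize_pos hf p).ne'
  simp only [mulVec, dotProduct, transpose_apply, pinvMat, Pi.one_apply, mul_one]
  rw [Finset.sum_ite, Finset.sum_const_zero, add_zero, Finset.sum_const, nsmul_eq_mul]
  exact mul_inv_cancel₀ hp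

lemma liftG_eq_pinvMat_conj (W : Matrix (Fin N) (Fin N) ℝ) :
    liftG f W = pinvMat f * coarse f W * (pinvMat f)ᵀ := by
  ext i j
  simp [liftG, pinvMat, mul_apply, div_eq_mul_inv, mul_comm, mul_left_comm]

lemma deg_pinvMat_conj (hf : Function.Surjective f) (M : Matrix (Fin n) (Fin n) ℝ) (i : Fin N) :
    deg (pinvMat f * M * (pinvMat f)ᵀ) i = deg M (f i) / partSize f (f i) := by
  rw [deg_eq_mulVec_one, deg_eq_mulVec_one, ← mulVec_mulVec, pinvMat_transpose_mulVec_one hf,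
    ← mulVec_mulVec, pinvMat_mulVec]

lemma invSqrtDeg_transpose {m : ℕ} (A : Matrix (Fin m) (Fin m) ℝ) :
    (invSqrtDeg A)ᵀ = invSqrtDeg A :=
  diagonal_transpose _

lemma invSqrtDeg_pinvMat_conj_mul_pinvMat (hf : Function.Surjective f)
    (M : Matrix (Fin n) (Fin n) ℝ) :
    invSqrtDeg (pinvMat f * M * (pinvMat f)ᵀ) * pinvMat f =
      (coarsenMat f)ᵀ * invSqrtDeg M := by
  ext i q
  simp only [invSqrtDeg, diagonal_mul, mul_diagonal, transpose_apply, pinvMat, coarsenMat]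
  split_ifs with hq
  · subst hq
    have hs : (0 : ℝ) < partSize f (f i) := by exact_mod_cast partSize_pos hf (f i)
    rw [deg_pinvMat_conj hf, Real.sqrt_div' _ hs.le, inv_div]
    have hsq := Real.sq_sqrt hs.le
    have hpos := Real.sqrt_pos.2 hs
    field_simp
    rw [hsq]
  · simp

lemma coarsenMat_mul_transpose (hf : Function.Surjective f) :
    coarsenMat f * (coarsenMat f)ᵀ = 1 := by
  ext p q
  simp only [coarsenMat, mul_apply, transpose_apply, one_apply]
  split_ifs with hpq
  · subst hpq
    have hs : (0 : ℝ) < partSize f p := by exact_mod_cast partSize_pos hf p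
    simp only [mul_ite, ite_mul, zero_mul, mul_zero, Finset.sum_ite, Finset.sum_const_zero,
      add_zero, Finset.sum_const, nsmul_eq_mul, Finset.filter_filter, and_self]
    change (partSize f p : ℝ) * _ = 1
    rw [← mul_inv, Real.mul_self_sqrt hs.le, mul_inv_cancel₀ hs.ne']
  · refine Finset.sum_eq_zero fun j _ => ?_
    split_ifs with hp hq <;> simp_all

lemma normLap_pinvMat_conj_mul_coarsenMat_transpose (hf : Function.Surjective f)
    (M : Matrix (Fin n) (Fin n) ℝ) :
    normLap (pinvMat f * M * (pinvMat f)ᵀ) * (coarsenMat f)ᵀ =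
      (coarsenMat f)ᵀ * normLap M := by
  set D := invSqrtDeg (pinvMat f * M * (pinvMat f)ᵀ)
  have hD : (pinvMat f)ᵀ * D = invSqrtDeg M * coarsenMat f := by
    simpa only [transpose_mul, transpose_transpose, invSqrtDeg_transpose] using
      congrArg transpose (invSqrtDeg_pinvMat_conj_mul_pinvMat hf M)
  have hconj : D * (pinvMat f * M * (pinvMat f)ᵀ) * D * (coarsenMat f)ᵀ =
      (coarsenMat f)ᵀ * (invSqrtDeg M * M * invSqrtDeg M) :=
    calc _ = D * pinvMat f * M * ((pinvMat f)ᵀ * D) * (coarsenMat f)ᵀ := by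
          simp only [Matrix.mul_assoc]
      _ = (coarsenMat f)ᵀ * invSqrtDeg M * M * invSqrtDeg M *
            (coarsenMat f * (coarsenMat f)ᵀ) := by
          rw [invSqrtDeg_pinvMat_conj_mul_pinvMat hf, hD]; simp only [Matrix.mul_assoc]
      _ = _ := by rw [coarsenMat_mul_transpose hf, Matrix.mul_one]; simp only [Matrix.mul_assoc]
  rw [normLap, normLap, Matrix.sub_mul, Matrix.mul_sub, Matrix.one_mul, Matrix.mul_one, hconj]

end Lift

theorem eigenvector_lift_general {N n : ℕ} (W : Matrix (Fin N) (Fin N) ℝ)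
    (f : Fin N → Fin n) (hsurj : Function.Surjective f)
    (lam : ℝ) (uc : Fin n → ℝ)
    (h : (normLap (coarse f W)).mulVec uc = lam • uc) :
    (normLap (liftG f W)).mulVec ((coarsenMat f)ᵀ.mulVec uc) =
      lam • ((coarsenMat f)ᵀ.mulVec uc) := by
  calc (normLap (liftG f W)) *ᵥ ((coarsenMat f)ᵀ *ᵥ uc)
      = (normLap (pinvMat f * coarse f W * (pinvMat f)ᵀ) * (coarsenMat f)ᵀ) *ᵥ uc := by
        rw [mulVec_mulVec, liftG_eq_pinvMat_conj]
    _ = (coarsenMat f)ᵀ *ᵥ (normLap (coarse f W) *ᵥ uc) := by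
        rw [normLap_pinvMat_conj_mul_coarsenMat_transpose hsurj, mulVec_mulVec]
    _ = lam • ((coarsenMat f)ᵀ *ᵥ uc) := by
        rw [h, mulVec_smul]

/-- **Eigenvector preservation.**
If `u_c` is an eigenvector of the coarse normalized Laplacian with eigenvalue `λ`,
then `Cᵀ u_c` is an eigenvector of the lifted normalized Laplacian with eigenvalue `λ`. -/
theorem eigenvector_lift {N n : ℕ} (W : Matrix (Fin N) (Fin N) ℝ)
    (hsymm : W.IsSymm) (hnonneg : ∀ i j, 0 ≤ W i j) (hdeg : ∀ i, 0 < deg W i)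
    (f : Fin N → Fin n) (hsurj : Function.Surjective f)
    (lam : ℝ) (uc : Fin n → ℝ)
    (h : (normLap (coarse f W)).mulVec uc = lam • uc) :
    (normLap (liftG f W)).mulVec ((coarsenMat f)ᵀ.mulVec uc) =
      lam • ((coarsenMat f)ᵀ.mulVec uc) :=
  eigenvector_lift_general W f hsurj lam uc h
end
end

section
/- Let W ∈ ℝ^{N×N} be a symmetric matrix with nonnegative entries and positive degrees, let W_c be its coarse graph with respect to a partition into n nonempty parts, let C ∈ ℝ^{n×N} be the normalized coarsening matrix, and let W_l be the lifted graph with degree matrix D_l. Then D_l^{-1/2} W_l D_l^{-1/2} = Cᵀ (D_c^{-1/2} W_c D_c^{-1/2}) C; equivalently, the normalized Laplacians satisfy L_l = I_N − CᵀC + Cᵀ L_c C. -/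
/-!
Each coarse weight `W_c(p,q)` is spread evenly over the `|S_p|·|S_q|` pairs of nodes it lifts to,
so the lifted degree is `d_l(i) = d_c(f i) / |S_{f i}|` (the fibre `S_{f i}` contains `i`). Hence,
with `p = f i` and `q = f j`, entry `(i, j)` of `D_l^{-1/2} W_l D_l^{-1/2}` is
`√|S_p| / √d_c(p) · W_c(p,q) / (|S_p|·|S_q|) · √|S_q| / √d_c(q)`, which is entry `(i, j)` of
`Cᵀ D_c^{-1/2} W_c D_c^{-1/2} C`. The Laplacian identity follows by expanding `Cᵀ (I - A) C`.
-/

open Matrix BigOperators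

noncomputable section

section Coarsening

variable {N n : ℕ}

lemma partSize_comp_pos (f : Fin N → Fin n) (i : Fin N) : 0 < partSize f (f i) :=
  Finset.card_pos.2 ⟨i, by simp⟩

lemma coarse_apply (f : Fin N → Fin n) (W : Matrix (Fin N) (Fin N) ℝ) (p q : Fin n) :
    coarse f W p q = ∑ l with f l = q, ∑ k with f k = p, W k l := by
  simp only [coarse, mul_apply, transpose_apply, partMat, Finset.sum_filter, mul_ite, mul_one,
    mul_zero, ite_mul, one_mul, zero_mul]

lemma sum_fiberSum_div_partSize (f : Fin N → Fin n) (r : Fin N → ℝ) :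
    ∑ j, (∑ l with f l = f j, r l) / partSize f (f j) = ∑ l, r l := by
  calc ∑ j, (∑ l with f l = f j, r l) / partSize f (f j)
      = ∑ l, ∑ j with f j = f l, r l / partSize f (f l) := by
        simp_rw [Finset.sum_div, Finset.sum_filter]
        rw [Finset.sum_comm]
        refine Finset.sum_congr rfl fun l _ => Finset.sum_congr rfl fun j _ => ?_
        by_cases h : f l = f j <;> simp [h, eq_comm]
    _ = ∑ l, r l := by
        refine Finset.sum_congr rfl fun l _ => ?_
        have hpos : (0 : ℝ) < partSize f (f l) := by exact_mod_cast partSize_comp_pos f l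
        rw [Finset.sum_const, nsmul_eq_mul, ← partSize, mul_div_cancel₀ _ hpos.ne']

lemma deg_coarse (f : Fin N → Fin n) (W : Matrix (Fin N) (Fin N) ℝ) (p : Fin n) :
    deg (coarse f W) p = ∑ l, ∑ k with f k = p, W k l := by
  simp only [deg, coarse_apply]
  exact Finset.sum_fiberwise _ f _

lemma deg_liftG (f : Fin N → Fin n) (W : Matrix (Fin N) (Fin N) ℝ) (i : Fin N) :
    deg (liftG f W) i = deg (coarse f W) (f i) / partSize f (f i) := by
  have h := sum_fiberSum_div_partSize f fun l => ∑ k with f k = f i, W k l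
  simp only [← coarse_apply, ← deg_coarse] at h
  simp only [deg, liftG, mul_comm (partSize f (f i) : ℝ), ← div_div, ← Finset.sum_div, h]

lemma invSqrtDeg_mul_mul_invSqrtDeg_apply (W : Matrix (Fin N) (Fin N) ℝ) (i j : Fin N) :
    (invSqrtDeg W * W * invSqrtDeg W) i j = (√(deg W i))⁻¹ * W i j * (√(deg W j))⁻¹ := by
  simp [invSqrtDeg, mul_diagonal, diagonal_mul]

lemma coarsenMat_transpose_mul_mul_apply (f : Fin N → Fin n) (A : Matrix (Fin n) (Fin n) ℝ)
    (i j : Fin N) :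
    ((coarsenMat f)ᵀ * A * coarsenMat f) i j =
      (√(partSize f (f i) : ℝ))⁻¹ * A (f i) (f j) * (√(partSize f (f j) : ℝ))⁻¹ := by
  simp [mul_apply, coarsenMat, ite_mul, mul_ite, Finset.sum_ite_eq]

lemma inv_sqrt_div_mul_div_mul_inv_sqrt_div (a b w : ℝ) {s t : ℝ} (hs : 0 < s) (ht : 0 < t) :
    (√(a / s))⁻¹ * (w / (s * t)) * (√(b / t))⁻¹ =
      (√s)⁻¹ * ((√a)⁻¹ * w * (√b)⁻¹) * (√t)⁻¹ := by
  have hs' : √s ≠ 0 := (Real.sqrt_pos.2 hs).ne'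
  have ht' : √t ≠ 0 := (Real.sqrt_pos.2 ht).ne'
  have hst : s * t = (√s * √s) * (√t * √t) := by
    rw [Real.mul_self_sqrt hs.le, Real.mul_self_sqrt ht.le]
  rw [Real.sqrt_div' _ hs.le, Real.sqrt_div' _ ht.le, inv_div, inv_div, hst]
  field_simp

lemma invSqrtDeg_liftG_mul_mul_apply (f : Fin N → Fin n) (W : Matrix (Fin N) (Fin N) ℝ)
    (i j : Fin N) :
    (invSqrtDeg (liftG f W) * liftG f W * invSqrtDeg (liftG f W)) i j =
      (√(partSize f (f i) : ℝ))⁻¹ *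
        (invSqrtDeg (coarse f W) * coarse f W * invSqrtDeg (coarse f W)) (f i) (f j) *
        (√(partSize f (f j) : ℝ))⁻¹ := by
  rw [invSqrtDeg_mul_mul_invSqrtDeg_apply, invSqrtDeg_mul_mul_invSqrtDeg_apply, deg_liftG,
    deg_liftG]
  exact inv_sqrt_div_mul_div_mul_inv_sqrt_div _ _ _
    (by exact_mod_cast partSize_comp_pos f i) (by exact_mod_cast partSize_comp_pos f j)

end Coarsening

theorem lifted_normLap_eq_general {N n : ℕ} (W : Matrix (Fin N) (Fin N) ℝ)
    (f : Fin N → Fin n) :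
    invSqrtDeg (liftG f W) * liftG f W * invSqrtDeg (liftG f W) =
      (coarsenMat f)ᵀ *
        (invSqrtDeg (coarse f W) * coarse f W * invSqrtDeg (coarse f W)) * coarsenMat f ∧
    normLap (liftG f W) =
      1 - (coarsenMat f)ᵀ * coarsenMat f +
        (coarsenMat f)ᵀ * normLap (coarse f W) * coarsenMat f := by
  have hnormAdj : invSqrtDeg (liftG f W) * liftG f W * invSqrtDeg (liftG f W) =
      (coarsenMat f)ᵀ *
        (invSqrtDeg (coarse f W) * coarse f W * invSqrtDeg (coarse f W)) * coarsenMat f := by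
    ext i j
    rw [invSqrtDeg_liftG_mul_mul_apply, coarsenMat_transpose_mul_mul_apply]
  refine ⟨hnormAdj, ?_⟩
  rw [normLap, normLap, hnormAdj, Matrix.mul_sub, Matrix.sub_mul, Matrix.mul_one]
  abel

/-- **Lifted normalized Laplacian via the coarsening matrix.**
`D_l^{-1/2} W_l D_l^{-1/2} = Cᵀ (D_c^{-1/2} W_c D_c^{-1/2}) C` and, equivalently,
`L_l = I - CᵀC + Cᵀ L_c C`. -/
theorem lifted_normLap_eq {N n : ℕ} (W : Matrix (Fin N) (Fin N) ℝ)
    (hsymm : W.IsSymm) (hnonneg : ∀ i j, 0 ≤ W i j) (hdeg : ∀ i, 0 < deg W i)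
    (f : Fin N → Fin n) (hsurj : Function.Surjective f) :
    invSqrtDeg (liftG f W) * liftG f W * invSqrtDeg (liftG f W) =
      (coarsenMat f)ᵀ *
        (invSqrtDeg (coarse f W) * coarse f W * invSqrtDeg (coarse f W)) * coarsenMat f ∧
    normLap (liftG f W) =
      1 - (coarsenMat f)ᵀ * coarsenMat f +
        (coarsenMat f)ᵀ * normLap (coarse f W) * coarsenMat f :=
  lifted_normLap_eq_general W f
end
end

section
/- Let W ∈ ℝ^{N×N} be a symmetric matrix with nonnegative entries and positive degrees, coarsened with respect to a partition of {1,…,N} into n nonempty sets S_1,…,S_n. Suppose every two nodes in the same partition have equal normalized edge-weight vectors, i.e., w(i)/d(i) = w(j)/d(j) whenever i, j ∈ S_p for some p, where w(i) is the i-th row of W and d(i) its row sum. Then the sorted eigenvalue sequence of the normalized Laplacian L of W equals the sorted eigenvalue sequence of the normalized Laplacian L_l of the lifted graph W_l; in particular the full spectral distance SD_full(G, G_c) = Σ_{i=1}^N |λ(i) − λ_l(i)| equals 0. -/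
/-! Write `R = D⁻¹W` for the random-walk matrix and `Π = P⁺P` for the averaging projection onto
vectors constant on parts. The hypothesis says that the rows of `R` are constant on parts, so
`ΠR = R`. Since `W_l = ΠWΠ`, the lifted degrees are `Πd` and `D_l⁻¹ W_l = D_l⁻¹ (ΠDR) Π = RΠ`,
which has the characteristic polynomial of `ΠR = R` (`AB` and `BA` always share it). The same
`AB`/`BA` swap shows that `L = I - D^{-1/2} W D^{-1/2}` has the characteristic polynomial of
`I - R`, and sorted eigenvalue lists are determined by the characteristic polynomial. -/

open Matrix BigOperators

noncomputable section

open Polynomial in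
theorem Matrix.charpoly_one_sub_congr {R ι : Type*} [CommRing R] [IsDomain R] [Infinite R]
    [Fintype ι] [DecidableEq ι] {A B : Matrix ι ι R} (h : A.charpoly = B.charpoly) :
    (1 - A).charpoly = (1 - B).charpoly := by
  have eval_charpoly_one_sub (M : Matrix ι ι R) (t : R) :
      (1 - M).charpoly.eval t = (-1) ^ Fintype.card ι * M.charpoly.eval (1 - t) := by
    rw [eval_charpoly, eval_charpoly, ← det_neg]
    congr 1
    ext i j
    by_cases hij : i = j
    · subst hij; simp; ring
    · simp [hij]
  exact Polynomial.funext fun t => by rw [eval_charpoly_one_sub, eval_charpoly_one_sub, h]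

open Polynomial in
theorem eq_of_monotone_of_prod_X_sub_C_eq {R : Type*} [CommRing R] [IsDomain R] [LinearOrder R]
    {m : ℕ} {μ ν : Fin m → R} (hμ : Monotone μ) (hν : Monotone ν)
    (h : ∏ i, (X - C (μ i)) = ∏ i, (X - C (ν i))) : μ = ν := by
  have roots_eq (κ : Fin m → R) : (∏ i, (X - C (κ i))).roots = ↑(List.ofFn κ) := by
    rw [← roots_multiset_prod_X_sub_C (List.ofFn κ : Multiset R)]
    simp [List.prod_ofFn]
  have hperm : (List.ofFn μ).Perm (List.ofFn ν) := by
    rw [← Multiset.coe_eq_coe, ← roots_eq, ← roots_eq, h]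
  exact List.ofFn_injective (hperm.eq_of_sortedLE hμ.sortedLE_ofFn hν.sortedLE_ofFn)

theorem sortedEigs_unique {m : ℕ} {A B : Matrix (Fin m) (Fin m) ℝ} {μ ν : Fin m → ℝ}
    (hAB : A.charpoly = B.charpoly) (hμ : sortedEigs A μ) (hν : sortedEigs B ν) : μ = ν :=
  eq_of_monotone_of_prod_X_sub_C_eq hμ.1 hν.1 (hμ.2.symm.trans (hAB.trans hν.2))

section Partition

variable {N n : ℕ} (f : Fin N → Fin n)

/-- The averaging projection `Π = P⁺ P` onto vectors that are constant on every part. -/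
def partProj : Matrix (Fin N) (Fin N) ℝ := pinvMat f * partMat f

theorem partSize_pos_s5 (i : Fin N) : 0 < (partSize f (f i) : ℝ) := by
  have : i ∈ Finset.univ.filter fun k => f k = f i := by simp
  exact_mod_cast Finset.card_pos.mpr ⟨i, this⟩

theorem partProj_apply (i k : Fin N) :
    partProj f i k = if f k = f i then (partSize f (f i) : ℝ)⁻¹ else 0 := by
  by_cases h : f k = f i
  · simp [partProj, pinvMat, partMat, mul_apply, h]
  · simp [partProj, pinvMat, partMat, mul_apply, h, Ne.symm h]

theorem partProj_transpose : (partProj f)ᵀ = partProj f := by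
  ext i k
  by_cases h : f k = f i
  · simp [partProj_apply, h]
  · simp [partProj_apply, h, Ne.symm h]

theorem partProj_mulVec_one : partProj f *ᵥ 1 = 1 := by
  ext i
  simp only [mulVec, dotProduct, partProj_apply, Pi.one_apply, mul_one]
  rw [← Finset.sum_filter, Finset.sum_const, nsmul_eq_mul, ← partSize,
    mul_inv_cancel₀ (partSize_pos_s5 f i).ne']

theorem partProj_mul_diagonal_mul {α : Type*} (d : Fin N → ℝ) (M : Matrix (Fin N) α ℝ)
    (hM : ∀ i k, f i = f k → M i = M k) :
    partProj f * (diagonal d * M) = diagonal (partProj f *ᵥ d) * M := by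
  ext i j
  rw [diagonal_mul, mul_apply, mulVec, dotProduct, Finset.sum_mul]
  refine Finset.sum_congr rfl fun k _ => ?_
  by_cases h : f k = f i
  · rw [diagonal_mul, hM k i h]; ring
  · simp [partProj_apply, h]

theorem partProj_mul_of_rows_eq {α : Type*} (M : Matrix (Fin N) α ℝ)
    (hM : ∀ i k, f i = f k → M i = M k) : partProj f * M = M := by
  simpa [partProj_mulVec_one] using partProj_mul_diagonal_mul f 1 M hM

end Partition

section Graph

variable {N n : ℕ} (W : Matrix (Fin N) (Fin N) ℝ) (f : Fin N → Fin n)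

theorem deg_eq_mulVec_one_s5 : deg W = W *ᵥ 1 := by
  ext i
  simp [deg, mulVec, dotProduct]

theorem rwMat_apply (i j : Fin N) : rwMat W i j = W i j / deg W i := by
  simp [rwMat, diagonal_mul, div_eq_inv_mul]

theorem diagonal_deg_mul_rwMat (hdeg : ∀ i, deg W i ≠ 0) : diagonal (deg W) * rwMat W = W := by
  rw [rwMat, ← Matrix.mul_assoc, diagonal_mul_diagonal]
  simp [hdeg]

theorem rwMat_eq_of_eq_diagonal_deg_mul (hdeg : ∀ i, deg W i ≠ 0) {M : Matrix (Fin N) (Fin N) ℝ}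
    (hM : W = diagonal (deg W) * M) : rwMat W = M := by
  rw [rwMat]
  nth_rewrite 2 [hM]
  rw [← Matrix.mul_assoc, diagonal_mul_diagonal]
  simp [hdeg]

theorem charpoly_normLap (hdeg : ∀ i, 0 ≤ deg W i) :
    (normLap W).charpoly = (1 - rwMat W).charpoly := by
  refine charpoly_one_sub_congr ?_
  rw [charpoly_mul_comm, ← Matrix.mul_assoc, invSqrtDeg, diagonal_mul_diagonal, rwMat]
  simp_rw [← mul_inv, Real.mul_self_sqrt (hdeg _)]

theorem liftG_eq_partProj_mul : liftG f W = partProj f * W * partProj f := by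
  have hpinv : liftG f W = pinvMat f * coarse f W * (pinvMat f)ᵀ := by
    ext i j
    simp [liftG, pinvMat, mul_apply, div_eq_mul_inv, mul_comm, mul_left_comm]
  nth_rewrite 2 [← partProj_transpose f]
  simp only [hpinv, coarse, partProj, transpose_mul, Matrix.mul_assoc]

theorem deg_liftG_s5 : deg (liftG f W) = partProj f *ᵥ deg W := by
  rw [deg_eq_mulVec_one_s5, deg_eq_mulVec_one_s5, liftG_eq_partProj_mul, ← mulVec_mulVec,
    partProj_mulVec_one, mulVec_mulVec]

theorem deg_liftG_pos (hdeg : ∀ i, 0 < deg W i) (i : Fin N) : 0 < deg (liftG f W) i := by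
  rw [deg_liftG_s5, mulVec, dotProduct]
  refine Finset.sum_pos' (fun k _ => mul_nonneg ?_ (hdeg k).le) ⟨i, Finset.mem_univ i, ?_⟩
  · rw [partProj_apply]
    split_ifs <;> positivity
  · rw [partProj_apply, if_pos rfl]
    exact mul_pos (inv_pos.2 (partSize_pos_s5 f i)) (hdeg i)

variable {W f}

theorem rwMat_liftG (hdeg : ∀ i, 0 < deg W i)
    (hrows : ∀ i k, f i = f k → rwMat W i = rwMat W k) :
    rwMat (liftG f W) = rwMat W * partProj f := by
  refine rwMat_eq_of_eq_diagonal_deg_mul _ (fun i => (deg_liftG_pos W f hdeg i).ne') ?_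
  calc liftG f W = partProj f * (diagonal (deg W) * rwMat W) * partProj f := by
        rw [diagonal_deg_mul_rwMat W fun i => (hdeg i).ne', liftG_eq_partProj_mul]
    _ = diagonal (deg (liftG f W)) * (rwMat W * partProj f) := by
        rw [partProj_mul_diagonal_mul f _ _ hrows, deg_liftG_s5, Matrix.mul_assoc]

theorem charpoly_normLap_liftG (hdeg : ∀ i, 0 < deg W i)
    (hrows : ∀ i k, f i = f k → rwMat W i = rwMat W k) :
    (normLap (liftG f W)).charpoly = (normLap W).charpoly := by
  rw [charpoly_normLap _ fun i => (deg_liftG_pos W f hdeg i).le,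
    charpoly_normLap W fun i => (hdeg i).le]
  refine charpoly_one_sub_congr ?_
  rw [rwMat_liftG hdeg hrows, charpoly_mul_comm, partProj_mul_of_rows_eq f _ hrows]

end Graph

theorem spectral_distance_zero_general {N n : ℕ} (W : Matrix (Fin N) (Fin N) ℝ)
    (hdeg : ∀ i, 0 < deg W i)
    (f : Fin N → Fin n)
    (hsame : ∀ i j, f i = f j → ∀ k, W i k / deg W i = W j k / deg W j)
    (μ μl : Fin N → ℝ)
    (hμ : sortedEigs (normLap W) μ)
    (hμl : sortedEigs (normLap (liftG f W)) μl) :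
    μ = μl ∧ ∑ i, |μ i - μl i| = 0 := by
  have hrows : ∀ i k, f i = f k → rwMat W i = rwMat W k := fun i k h =>
    funext fun j => by simp only [rwMat_apply, hsame i k h j]
  have hμμl : μ = μl := sortedEigs_unique (charpoly_normLap_liftG hdeg hrows).symm hμ hμl
  exact ⟨hμμl, by simp [hμμl]⟩

/-- **Proposition 4.1: exact spectrum preservation.**
If every two nodes in the same part have equal normalized edge-weight vectors,
then the sorted spectra of the normalized Laplacians of the original and lifted
graphs coincide; in particular the full spectral distance is `0`. -/
theorem spectral_distance_zero {N n : ℕ} (W : Matrix (Fin N) (Fin N) ℝ)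
    (hsymm : W.IsSymm) (hnonneg : ∀ i j, 0 ≤ W i j) (hdeg : ∀ i, 0 < deg W i)
    (f : Fin N → Fin n) (hsurj : Function.Surjective f)
    (hsame : ∀ i j, f i = f j → ∀ k, W i k / deg W i = W j k / deg W j)
    (μ μl : Fin N → ℝ)
    (hμ : sortedEigs (normLap W) μ)
    (hμl : sortedEigs (normLap (liftG f W)) μl) :
    μ = μl ∧ ∑ i, |μ i - μl i| = 0 :=
  spectral_distance_zero_general W hdeg f hsame μ μl hμ hμl
end
end
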